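/- arXiv:2404.14274 — 2 statements merged into one kernel-verified Lean document; each statement's English description precedes it below -/
import Mathlib

section
/- The curve t ↦ F_t u₀ is the unique global solution of the oscillation-eliminating damping initial value problem u'(t) = −Σ_{m=0}^{k} δ^m (u(t) − P^{m−1} u(t)) with u(0) = u₀; that is, F_t u₀ is differentiable in t, satisfies this linear ODE for all t ∈ ℝ, equals u₀ at t = 0, and any differentiable curve satisfying the same ODE and initial condition coincides with F_t u₀. -/
/-!
In the orthonormal basis `(e_p)` both `F_t` and the right-hand side of the ODE are diagonal.
The ODE multiplies the `p`-th coordinate by `-λ_p`, where `λ_p = δ⁰ + ⋯ + δ^{ℓ(p)}` for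
`ℓ(p) ≥ 1` and `λ_p = 0` for `ℓ(p) = 0` (by the convention `P^{-1} = P⁰`), while `F_t`
multiplies it by `exp (-t λ_p)`. The initial value problem therefore splits into the scalar
problems `c' = -λ_p c`, whose unique solution is `c(t) = exp (-t λ_p) c(0)`.
-/

open scoped RealInnerProductSpace BigOperators

/-- The orthogonal projection `Pᵐ` onto the span of the orthonormal basis vectors of
level (polynomial degree) at most `m`. -/
noncomputable def levelProj {E : Type*} [NormedAddCommGroup E] [InnerProductSpace ℝ E]
    {ι : Type*} [Fintype ι] (b : OrthonormalBasis ι ℝ E) (ℓ : ι → ℕ) (m : ℕ) (u : E) : E :=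
  ∑ p ∈ Finset.univ.filter (fun p => ℓ p ≤ m), ⟪u, b p⟫ • b p

/-- The exact oscillation-eliminating damping operator
`F_t u₀ = Σ_{ℓ(p)=0} ⟨u₀,e_p⟩ e_p + Σ_{j=1}^{k} exp(−t Σ_{m=0}^{j} δ^m) Σ_{ℓ(p)=j} ⟨u₀,e_p⟩ e_p`. -/
noncomputable def oeDamp {E : Type*} [NormedAddCommGroup E] [InnerProductSpace ℝ E]
    {ι : Type*} [Fintype ι] (b : OrthonormalBasis ι ℝ E) (ℓ : ι → ℕ) (δ : ℕ → ℝ) (k : ℕ)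
    (t : ℝ) (u₀ : E) : E :=
  (∑ p ∈ Finset.univ.filter (fun p => ℓ p = 0), ⟪u₀, b p⟫ • b p)
    + ∑ j ∈ Finset.Icc 1 k, Real.exp (-(t * ∑ m ∈ Finset.range (j + 1), δ m)) •
        ∑ p ∈ Finset.univ.filter (fun p => ℓ p = j), ⟪u₀, b p⟫ • b p

open Finset

theorem eq_exp_mul_of_hasDerivAt_mul {f : ℝ → ℝ} {c : ℝ} (hf : ∀ s, HasDerivAt f (c * f s) s)
    (t : ℝ) : f t = Real.exp (t * c) * f 0 := by
  have hg : ∀ s, HasDerivAt (fun s => Real.exp (-(s * c)) * f s) 0 s := fun s => by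
    have hexp := ((hasDerivAt_mul_const (x := s) c).neg).exp
    exact (hexp.mul (hf s)).congr_deriv (by ring)
  have hconst := is_const_of_deriv_eq_zero (fun s => (hg s).differentiableAt)
    (fun s => (hg s).deriv) t 0
  rw [zero_mul, neg_zero, Real.exp_zero, one_mul] at hconst
  rw [← hconst, ← mul_assoc, ← Real.exp_add, add_neg_cancel, Real.exp_zero, one_mul]

theorem hasDerivAt_exp_mul_mul (c a t : ℝ) :
    HasDerivAt (fun s => Real.exp (s * c) * a) (c * (Real.exp (t * c) * a)) t :=
  ((hasDerivAt_mul_const (x := t) c).exp.mul_const a).congr_deriv (by ring)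

theorem range_filter_sub_one_lt {n k : ℕ} (hn : n ≤ k) :
    (range (k + 1)).filter (fun m => m - 1 < n) = if n = 0 then ∅ else range (n + 1) := by
  ext m
  split_ifs <;> simp only [mem_filter, mem_range, notMem_empty, iff_false, not_and] <;> omega

namespace OrthonormalBasis

variable {E : Type*} [NormedAddCommGroup E] [InnerProductSpace ℝ E] {ι : Type*} [Fintype ι]
  (b : OrthonormalBasis ι ℝ E)

theorem inner_sum_filter_smul (P : ι → Prop) [DecidablePred P] (a : ι → ℝ) (p : ι) :
    ⟪b p, ∑ q ∈ univ.filter P, a q • b q⟫ = if P p then a p else 0 := by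
  classical
  simp [inner_sum, inner_smul_right, orthonormal_iff_ite.mp b.orthonormal]

theorem hasDerivAt_iff_inner {v : ℝ → E} {v' : E} {t : ℝ} :
    HasDerivAt v v' t ↔ ∀ p, HasDerivAt (fun s => ⟪b p, v s⟫) ⟪b p, v'⟫ t := by
  refine ⟨fun hv p => by simpa using (hasDerivAt_const t (b p)).inner ℝ hv, fun h => ?_⟩
  have hsum := HasDerivAt.fun_sum fun p (_ : p ∈ univ) => (h p).smul_const (b p)
  simpa only [b.sum_repr'] using hsum

end OrthonormalBasis

section Damping

variable {E : Type*} [NormedAddCommGroup E] [InnerProductSpace ℝ E] {ι : Type*} [Fintype ι]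
  (b : OrthonormalBasis ι ℝ E) (ℓ : ι → ℕ) (δ : ℕ → ℝ) (k : ℕ)

noncomputable def levelRate (p : ι) : ℝ :=
  if ℓ p = 0 then 0 else ∑ m ∈ range (ℓ p + 1), δ m

noncomputable def dampingField (u : E) : E :=
  -∑ m ∈ range (k + 1), δ m • (u - levelProj b ℓ (m - 1) u)

theorem inner_levelProj (m : ℕ) (u : E) (p : ι) :
    ⟪b p, levelProj b ℓ m u⟫ = if ℓ p ≤ m then ⟪b p, u⟫ else 0 := by
  rw [levelProj, b.inner_sum_filter_smul, real_inner_comm]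

variable {ℓ k}

theorem inner_dampingField {p : ι} (hp : ℓ p ≤ k) (u : E) :
    ⟪b p, dampingField b ℓ δ k u⟫ = -levelRate ℓ δ p * ⟪b p, u⟫ := by
  have hterm : ∀ m, δ m * (⟪b p, u⟫ - if ℓ p ≤ m - 1 then ⟪b p, u⟫ else 0)
      = if m - 1 < ℓ p then δ m * ⟪b p, u⟫ else 0 := fun m => by
    split_ifs <;> first | omega | ring
  simp only [dampingField, inner_neg_right, inner_sum, inner_smul_right, inner_sub_right,
    inner_levelProj, hterm]
  rw [← sum_filter, ← sum_mul, range_filter_sub_one_lt hp, levelRate]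
  split_ifs <;> simp

theorem inner_oeDamp {p : ι} (hp : ℓ p ≤ k) (t : ℝ) (u₀ : E) :
    ⟪b p, oeDamp b ℓ δ k t u₀⟫ = Real.exp (-(t * levelRate ℓ δ p)) * ⟪b p, u₀⟫ := by
  simp only [oeDamp, inner_add_right, inner_sum, inner_smul_right, b.inner_sum_filter_smul,
    mul_ite, mul_zero, sum_ite_eq]
  rw [real_inner_comm, levelRate]
  by_cases h0 : ℓ p = 0
  · simp [h0]
  · have hmem : ℓ p ∈ Icc 1 k := mem_Icc.mpr ⟨Nat.one_le_iff_ne_zero.mpr h0, hp⟩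
    simp [h0, hmem]

end Damping

theorem oeDamp_unique_solution_of_damping_ivp_general
    {E : Type*} [NormedAddCommGroup E] [InnerProductSpace ℝ E]
    {ι : Type*} [Fintype ι]
    (b : OrthonormalBasis ι ℝ E) (ℓ : ι → ℕ) (δ : ℕ → ℝ) (k : ℕ)
    (hk : k = Finset.univ.sup ℓ) (u₀ : E) :
    (∀ t : ℝ, HasDerivAt (fun s => oeDamp b ℓ δ k s u₀)
        (-∑ m ∈ Finset.range (k + 1),
            δ m • (oeDamp b ℓ δ k t u₀ - levelProj b ℓ (m - 1) (oeDamp b ℓ δ k t u₀))) t)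
    ∧ oeDamp b ℓ δ k 0 u₀ = u₀
    ∧ ∀ v : ℝ → E,
        (∀ t : ℝ, HasDerivAt v
          (-∑ m ∈ Finset.range (k + 1), δ m • (v t - levelProj b ℓ (m - 1) (v t))) t) →
        v 0 = u₀ → ∀ t : ℝ, v t = oeDamp b ℓ δ k t u₀ := by
  have hℓ : ∀ p, ℓ p ≤ k := fun p => hk ▸ le_sup (mem_univ p)
  have hF : ∀ p t, ⟪b p, oeDamp b ℓ δ k t u₀⟫ = Real.exp (t * -levelRate ℓ δ p) * ⟪b p, u₀⟫ :=
    fun p t => by rw [inner_oeDamp b δ (hℓ p), mul_neg]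
  refine ⟨fun t => (b.hasDerivAt_iff_inner).mpr fun p => ?_, ?_, fun v hv hv0 t => ?_⟩
  · change HasDerivAt _ ⟪b p, dampingField b ℓ δ k _⟫ t
    simpa only [hF, inner_dampingField b δ (hℓ p)] using hasDerivAt_exp_mul_mul _ _ t
  · exact InnerProductSpace.ext_inner_left_basis b.toBasis fun p => by simp [hF]
  · refine InnerProductSpace.ext_inner_left_basis b.toBasis fun p => ?_
    have hcoord : ∀ s, HasDerivAt (fun s => ⟪b p, v s⟫) (-levelRate ℓ δ p * ⟪b p, v s⟫) s :=
      fun s => inner_dampingField b δ (hℓ p) (v s) ▸ (b.hasDerivAt_iff_inner).mp (hv s) p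
    simpa only [OrthonormalBasis.coe_toBasis, hF, hv0] using
      eq_exp_mul_of_hasDerivAt_mul hcoord t

/-- `t ↦ F_t u₀` is the unique global solution of the oscillation-eliminating
damping initial value problem `u'(t) = −Σ_{m=0}^{k} δ^m (u(t) − P^{m−1} u(t))`, `u(0) = u₀`
(with the convention `P^{−1} = P⁰`, realized here via truncated subtraction `m - 1` on `ℕ`):
it is differentiable in `t` and satisfies the ODE for all `t ∈ ℝ`, equals `u₀` at `t = 0`,
and any differentiable curve satisfying the same ODE and initial condition coincides with it. -/
theorem oeDamp_unique_solution_of_damping_ivp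
    {E : Type*} [NormedAddCommGroup E] [InnerProductSpace ℝ E]
    {ι : Type*} [Fintype ι] [Nonempty ι]
    (b : OrthonormalBasis ι ℝ E) (ℓ : ι → ℕ) (δ : ℕ → ℝ) (k : ℕ)
    (hk : k = Finset.univ.sup ℓ) (u₀ : E) :
    (∀ t : ℝ, HasDerivAt (fun s => oeDamp b ℓ δ k s u₀)
        (-∑ m ∈ Finset.range (k + 1),
            δ m • (oeDamp b ℓ δ k t u₀ - levelProj b ℓ (m - 1) (oeDamp b ℓ δ k t u₀))) t)
    ∧ oeDamp b ℓ δ k 0 u₀ = u₀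
    ∧ ∀ v : ℝ → E,
        (∀ t : ℝ, HasDerivAt v
          (-∑ m ∈ Finset.range (k + 1), δ m • (v t - levelProj b ℓ (m - 1) (v t))) t) →
        v 0 = u₀ → ∀ t : ℝ, v t = oeDamp b ℓ δ k t u₀ :=
  oeDamp_unique_solution_of_damping_ivp_general b ℓ δ k hk u₀
end

section
/- The locally divergence-free projection preserves cell averages of the magnetic field: for every B ∈ L²(K; ℝ²), the projection PB := Σ_{l=1}^{9} ( ⟨B, ψ⁽ˡ⁾⟩ / ⟨ψ⁽ˡ⁾, ψ⁽ˡ⁾⟩ ) ψ⁽ˡ⁾ satisfies ∫_K (PB)₁ dx dy = ∫_K B₁ dx dy and ∫_K (PB)₂ dx dy = ∫_K B₂ dx dy. -/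
open MeasureTheory

/-- The scaled coordinate `X = (x − x_K)/(h_x/2)` on the interval `[x₁, x₂]`. -/
noncomputable def scaledCoord (x1 x2 x : ℝ) : ℝ := (x - (x1 + x2) / 2) / ((x2 - x1) / 2)

/-- The nine locally divergence-free basis vector fields of degree 2 on the rectangle
`K = [x₁,x₂] × [y₁,y₂]`, written in terms of `h_x = x₂−x₁`, `h_y = y₂−y₁` and the scaled
coordinates `X`, `Y`. -/
noncomputable def ldfBasis (x1 x2 y1 y2 : ℝ) : Fin 9 → ℝ → ℝ → ℝ × ℝ :=
  ![fun _ _ => (1, 0),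
    fun _ _ => (0, 1),
    fun x y => ((x2 - x1) * scaledCoord x1 x2 x, -((y2 - y1) * scaledCoord y1 y2 y)),
    fun _ y => (scaledCoord y1 y2 y, 0),
    fun x _ => (0, scaledCoord x1 x2 x),
    fun x y => ((x2 - x1) * (scaledCoord x1 x2 x ^ 2 - 1 / 3),
      -(2 * (y2 - y1) * scaledCoord x1 x2 x * scaledCoord y1 y2 y)),
    fun x y => (2 * (x2 - x1) * scaledCoord x1 x2 x * scaledCoord y1 y2 y,
      -((y2 - y1) * (scaledCoord y1 y2 y ^ 2 - 1 / 3))),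
    fun _ y => (scaledCoord y1 y2 y ^ 2 - 1 / 3, 0),
    fun x _ => (0, scaledCoord x1 x2 x ^ 2 - 1 / 3)]

/-- The `L²(K; ℝ²)` inner product `⟨f, g⟩ = ∫_K f·g dx dy` on the rectangle
`K = [x₁,x₂] × [y₁,y₂]`. -/
noncomputable def ipK (x1 x2 y1 y2 : ℝ) (f g : ℝ → ℝ → ℝ × ℝ) : ℝ :=
  ∫ x in x1..x2, ∫ y in y1..y2,
    ((f x y).1 * (g x y).1 + (f x y).2 * (g x y).2)

/-- The locally divergence-free projection
`PB = Σ_{l=1}^{9} (⟨B, ψ⁽ˡ⁾⟩ / ⟨ψ⁽ˡ⁾, ψ⁽ˡ⁾⟩) ψ⁽ˡ⁾`. -/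
noncomputable def ldfProj (x1 x2 y1 y2 : ℝ) (B : ℝ → ℝ → ℝ × ℝ) : ℝ → ℝ → ℝ × ℝ :=
  fun x y => ∑ l : Fin 9,
    (ipK x1 x2 y1 y2 B (ldfBasis x1 x2 y1 y2 l)
      / ipK x1 x2 y1 y2 (ldfBasis x1 x2 y1 y2 l) (ldfBasis x1 x2 y1 y2 l))
      • ldfBasis x1 x2 y1 y2 l x y

/-!
`ψ⁽¹⁾ = (1, 0)` and `ψ⁽²⁾ = (0, 1)` are constant, and each component of every other basis field
is either zero or a product `p(X) q(Y)` in which one factor is `X` or `X² − 1/3`, both of mean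
zero over `[−1, 1]`. Integrating `PB` over `K` therefore leaves only the first two terms, and
their coefficients `⟨B, ψ⁽¹⁾⟩ / |K|` and `⟨B, ψ⁽²⁾⟩ / |K|` are exactly the cell averages of `B₁`
and `B₂`.
-/

lemma integral_integral_finsetSum {ι E : Type*} [NormedAddCommGroup E] [NormedSpace ℝ E]
    (s : Finset ι) {f : ι → ℝ → ℝ → E}
    (hf : ∀ i ∈ s, Continuous (Function.uncurry (f i))) (a b c d : ℝ) :
    ∫ x in a..b, ∫ y in c..d, ∑ i ∈ s, f i x y = ∑ i ∈ s, ∫ x in a..b, ∫ y in c..d, f i x y := by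
  have hinner : ∀ x, ∫ y in c..d, ∑ i ∈ s, f i x y = ∑ i ∈ s, ∫ y in c..d, f i x y := fun x =>
    intervalIntegral.integral_finsetSum fun i hi =>
      ((hf i hi).comp (Continuous.prodMk_right x)).intervalIntegrable _ _
  simp only [hinner]
  exact intervalIntegral.integral_finsetSum fun i hi =>
    (intervalIntegral.continuous_parametric_intervalIntegral_of_continuous' (hf i hi) c d
      ).intervalIntegrable _ _

lemma integral_scaledCoord {a b : ℝ} (h : a ≠ b) : ∫ t in a..b, scaledCoord a b t = 0 := by
  have hba : b - a ≠ 0 := sub_ne_zero.2 h.symm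
  simp only [scaledCoord]
  rw [intervalIntegral.integral_div, intervalIntegral.integral_comp_sub_right (fun t => t),
    integral_id]
  field_simp
  ring

lemma integral_scaledCoord_sq_sub {a b : ℝ} (h : a ≠ b) :
    ∫ t in a..b, (scaledCoord a b t ^ 2 - 1 / 3) = 0 := by
  have hba : b - a ≠ 0 := sub_ne_zero.2 h.symm
  simp only [scaledCoord, div_pow]
  rw [intervalIntegral.integral_sub (by apply Continuous.intervalIntegrable; fun_prop)
      intervalIntegrable_const,
    intervalIntegral.integral_div, intervalIntegral.integral_comp_sub_right (fun t => t ^ 2),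
    integral_pow, intervalIntegral.integral_const, smul_eq_mul]
  field_simp
  ring

section
variable (x1 x2 y1 y2 : ℝ)

lemma continuous_uncurry_ldfBasis (l : Fin 9) :
    Continuous (Function.uncurry (ldfBasis x1 x2 y1 y2 l)) := by
  fin_cases l <;>
    simp [ldfBasis, scaledCoord, Function.uncurry_def, -continuous_prodMk] <;> fun_prop

lemma ipK_ldfBasis_zero (f : ℝ → ℝ → ℝ × ℝ) :
    ipK x1 x2 y1 y2 f (ldfBasis x1 x2 y1 y2 0) = ∫ x in x1..x2, ∫ y in y1..y2, (f x y).1 := by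
  simp [ipK, ldfBasis]

lemma ipK_ldfBasis_one (f : ℝ → ℝ → ℝ × ℝ) :
    ipK x1 x2 y1 y2 f (ldfBasis x1 x2 y1 y2 1) = ∫ x in x1..x2, ∫ y in y1..y2, (f x y).2 := by
  simp [ipK, ldfBasis]

lemma integral_integral_comp_ldfProj (B : ℝ → ℝ → ℝ × ℝ) (π : ℝ × ℝ →L[ℝ] ℝ) :
    ∫ x in x1..x2, ∫ y in y1..y2, π (ldfProj x1 x2 y1 y2 B x y)
      = ∑ l, ipK x1 x2 y1 y2 B (ldfBasis x1 x2 y1 y2 l)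
          / ipK x1 x2 y1 y2 (ldfBasis x1 x2 y1 y2 l) (ldfBasis x1 x2 y1 y2 l)
          * ∫ x in x1..x2, ∫ y in y1..y2, π (ldfBasis x1 x2 y1 y2 l x y) := by
  simp only [ldfProj, map_sum, map_smul, smul_eq_mul]
  rw [integral_integral_finsetSum _ fun l _ => ?_]
  · simp only [intervalIntegral.integral_const_mul]
  · exact continuous_const.mul (π.continuous.comp (continuous_uncurry_ldfBasis x1 x2 y1 y2 l))

variable {x1 x2 y1 y2}

lemma integral_integral_ldfBasis_fst (hx : x1 ≠ x2) (hy : y1 ≠ y2) (l : Fin 9) :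
    ∫ x in x1..x2, ∫ y in y1..y2, (ldfBasis x1 x2 y1 y2 l x y).1
      = if l = 0 then (x2 - x1) * (y2 - y1) else 0 := by
  fin_cases l <;>
    simp only [ldfBasis, Fin.isValue, Fin.zero_eta, Fin.mk_one, Fin.reduceFinMk, Matrix.cons_val,
      intervalIntegral.integral_const, intervalIntegral.integral_const_mul,
      intervalIntegral.integral_zero, smul_eq_mul, integral_scaledCoord hx, integral_scaledCoord hy,
      integral_scaledCoord_sq_sub hx, integral_scaledCoord_sq_sub hy, mul_zero] <;>
    simp [mul_comm]

lemma integral_integral_ldfBasis_snd (hx : x1 ≠ x2) (hy : y1 ≠ y2) (l : Fin 9) :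
    ∫ x in x1..x2, ∫ y in y1..y2, (ldfBasis x1 x2 y1 y2 l x y).2
      = if l = 1 then (x2 - x1) * (y2 - y1) else 0 := by
  fin_cases l <;>
    simp only [ldfBasis, Fin.isValue, Fin.zero_eta, Fin.mk_one, Fin.reduceFinMk, Matrix.cons_val,
      intervalIntegral.integral_const, intervalIntegral.integral_const_mul,
      intervalIntegral.integral_neg, intervalIntegral.integral_zero, smul_eq_mul,
      integral_scaledCoord hx, integral_scaledCoord hy, integral_scaledCoord_sq_sub hx,
      integral_scaledCoord_sq_sub hy, mul_zero, neg_zero] <;>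
    simp [mul_comm]

end

theorem ldfProj_preserves_cell_average_general
    (x1 x2 y1 y2 : ℝ) (hx : x1 < x2) (hy : y1 < y2)
    (B : ℝ → ℝ → ℝ × ℝ) :
    (∫ x in x1..x2, ∫ y in y1..y2, (ldfProj x1 x2 y1 y2 B x y).1)
      = (∫ x in x1..x2, ∫ y in y1..y2, (B x y).1)
    ∧ (∫ x in x1..x2, ∫ y in y1..y2, (ldfProj x1 x2 y1 y2 B x y).2)
      = (∫ x in x1..x2, ∫ y in y1..y2, (B x y).2) := by
  have harea : (x2 - x1) * (y2 - y1) ≠ 0 :=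
    mul_ne_zero (sub_ne_zero.2 hx.ne') (sub_ne_zero.2 hy.ne')
  have hfst := integral_integral_comp_ldfProj x1 x2 y1 y2 B (ContinuousLinearMap.fst ℝ ℝ ℝ)
  have hsnd := integral_integral_comp_ldfProj x1 x2 y1 y2 B (ContinuousLinearMap.snd ℝ ℝ ℝ)
  simp only [ContinuousLinearMap.coe_fst', ContinuousLinearMap.coe_snd',
    integral_integral_ldfBasis_fst hx.ne hy.ne, integral_integral_ldfBasis_snd hx.ne hy.ne,
    mul_ite, mul_zero, Finset.sum_ite_eq', Finset.mem_univ, if_true] at hfst hsnd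
  rw [ipK_ldfBasis_zero, ipK_ldfBasis_zero, integral_integral_ldfBasis_fst hx.ne hy.ne,
    if_pos rfl, div_mul_cancel₀ _ harea] at hfst
  rw [ipK_ldfBasis_one, ipK_ldfBasis_one, integral_integral_ldfBasis_snd hx.ne hy.ne,
    if_pos rfl, div_mul_cancel₀ _ harea] at hsnd
  exact ⟨hfst, hsnd⟩

/-- The locally divergence-free projection preserves cell averages of the
magnetic field: for every `B ∈ L²(K; ℝ²)`, `∫_K (PB)₁ = ∫_K B₁` and `∫_K (PB)₂ = ∫_K B₂`. -/
theorem ldfProj_preserves_cell_average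
    (x1 x2 y1 y2 : ℝ) (hx : x1 < x2) (hy : y1 < y2)
    (B : ℝ → ℝ → ℝ × ℝ)
    (hB : MemLp (fun p : ℝ × ℝ => B p.1 p.2) 2
      (volume.restrict (Set.Icc x1 x2 ×ˢ Set.Icc y1 y2))) :
    (∫ x in x1..x2, ∫ y in y1..y2, (ldfProj x1 x2 y1 y2 B x y).1)
      = (∫ x in x1..x2, ∫ y in y1..y2, (B x y).1)
    ∧ (∫ x in x1..x2, ∫ y in y1..y2, (ldfProj x1 x2 y1 y2 B x y).2)
      = (∫ x in x1..x2, ∫ y in y1..y2, (B x y).2) :=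
  ldfProj_preserves_cell_average_general x1 x2 y1 y2 hx hy B
end
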